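/- arXiv:2302.13111 — 4 statements merged into one kernel-verified Lean document; each statement's English description precedes it below -/
import Mathlib

section
/- Parabolic maximum principle on stochastically complete manifolds: let (M,g) be a stochastically complete Riemannian manifold, a : M×[0,T] → ℝ bounded with a ≥ δ > 0, and u ∈ C^{2,α}(M×[0,T]) a solution of (∂_t + aΔ_g)u = 0 with u|_{t=0} = 0. Then u ≡ 0 on M×[0,T]. -/
open Set Filter Topology

lemma sSup_range_neg' {ι : Type*} (f : ι → ℝ) :
    sSup (Set.range fun i => -f i) = -sInf (Set.range f) := by
  have h : (Set.range fun i => -f i) = -(Set.range f) := by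
    ext x
    simp only [Set.mem_range, Set.mem_neg, neg_eq_iff_eq_neg]
  rw [h, Real.sInf_def, neg_neg]

set_option maxHeartbeats 1600000 in
lemma aux_sup13 {M : Type*} [Nonempty M] (T α δ A K : ℝ)
    (hT : 0 < T) (hα : α ∈ Set.Ioo (0 : ℝ) 1) (hδ : 0 < δ) (hK : 0 ≤ K)
    (Δ : (M → ℝ) → (M → ℝ)) (a : M → ℝ → ℝ)
    (ha : ∀ p, ∀ t ∈ Set.Icc 0 T, δ ≤ a p t ∧ a p t ≤ A)
    (u du : M → ℝ → ℝ)
    (hderiv : ∀ p, ∀ t ∈ Set.Icc 0 T, HasDerivAt (u p) (du p t) t)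
    (hhold : ∀ p, ∀ t ∈ Set.Icc 0 T, ∀ t' ∈ Set.Icc 0 T,
      |du p t - du p t'| ≤ K * |t - t'| ^ (α / 2))
    (hubd : ∀ t ∈ Set.Icc 0 T, BddAbove (Set.range fun p => u p t))
    (hOYsup : ∀ t ∈ Set.Icc 0 T, ∀ k : ℕ, 0 < k → ∃ p : M,
      u p t > sSup (Set.range fun q => u q t) - 1 / (k : ℝ) ∧
      -Δ (fun q => u q t) p < 1 / (k : ℝ))
    (heq : ∀ p, ∀ t ∈ Set.Icc 0 T, du p t + a p t * Δ (fun q => u q t) p = 0)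
    (h0 : ∀ p, u p 0 = 0) :
    ∀ p, ∀ t ∈ Set.Icc (0 : ℝ) T, u p t ≤ 0 := by
  set S : ℝ → ℝ := fun t => sSup (Set.range fun p => u p t) with hSdef
  have hα2 : 0 < α / 2 := by linarith [hα.1]
  have hApos : 0 < A := by
    obtain ⟨p₀⟩ := ‹Nonempty M›
    have h1 := ha p₀ 0 ⟨le_refl 0, hT.le⟩
    linarith [h1.1, h1.2]
  have hS0 : S 0 = 0 := by
    have h1 : (fun p : M => u p 0) = fun _ : M => (0 : ℝ) := funext h0
    simp only [hSdef, h1, Set.range_const, csSup_singleton]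
  -- key increment estimate
  have key : ∀ s ∈ Set.Icc (0:ℝ) T, ∀ t ∈ Set.Icc (0:ℝ) T, s ≤ t →
      S t ≤ S s + K * (t - s) * (t - s) ^ (α / 2) := by
    intro s hs t ht hst
    rcases eq_or_lt_of_le hst with rfl | hlt
    · simp
    apply le_of_forall_pos_le_add
    intro ε hε
    obtain ⟨k, hk⟩ := exists_nat_gt ((1 + (t - s) * A) / ε)
    have hnum : (0:ℝ) < 1 + (t - s) * A := by nlinarith
    have hkpos0 : (0:ℝ) < (k : ℝ) := lt_trans (div_pos hnum hε) hk
    have hkpos : 0 < k := by exact_mod_cast hkpos0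
    have hkε : (1 + (t - s) * A) / k < ε := by
      rw [div_lt_iff₀ hkpos0]
      rw [div_lt_iff₀ hε] at hk
      nlinarith
    obtain ⟨p, hp1, hp2⟩ := hOYsup t ht k hkpos
    -- du p t ≤ A / k
    have hap := ha p t ht
    have hdu_t : du p t ≤ A / k := by
      have he := heq p t ht
      have h1 : du p t = a p t * (-Δ (fun q => u q t) p) := by ring_nf; linarith [he]
      have h2 : a p t * (-Δ (fun q => u q t) p) ≤ a p t * (1 / k) :=
        mul_le_mul_of_nonneg_left hp2.le (by linarith [hap.1])
      have h3 : a p t * (1 / k) ≤ A * (1 / k) :=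
        mul_le_mul_of_nonneg_right hap.2 (by positivity)
      rw [h1]
      calc a p t * (-Δ (fun q => u q t) p) ≤ A * (1 / k) := le_trans h2 h3
        _ = A / k := by ring
    -- mean value theorem on [s,t]
    have hsub : Set.Icc s t ⊆ Set.Icc 0 T := Set.Icc_subset_Icc hs.1 ht.2
    have hcont : ContinuousOn (u p) (Set.Icc s t) := fun x hx =>
      ((hderiv p x (hsub hx)).continuousAt).continuousWithinAt
    have hdiff : ∀ x ∈ Set.Ioo s t, HasDerivAt (u p) (du p x) x := fun x hx =>
      hderiv p x (hsub ⟨hx.1.le, hx.2.le⟩)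
    obtain ⟨c, hc, hceq⟩ := exists_hasDerivAt_eq_slope (u p) (du p) hlt hcont hdiff
    have hcmem : c ∈ Set.Icc (0:ℝ) T := hsub ⟨hc.1.le, hc.2.le⟩
    have hts0 : t - s ≠ 0 := sub_ne_zero_of_ne hlt.ne'
    have hslope : u p t - u p s = (t - s) * du p c := by
      rw [hceq]; field_simp
    -- Hölder bound on du p c
    have hhc := hhold p c hcmem t ht
    have habs : |c - t| ≤ t - s := by
      rw [abs_sub_comm, abs_of_nonneg (by linarith [hc.2] : (0:ℝ) ≤ t - c)]
      linarith [hc.1]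
    have hrpow : |c - t| ^ (α / 2) ≤ (t - s) ^ (α / 2) :=
      Real.rpow_le_rpow (abs_nonneg _) habs hα2.le
    have hduc : du p c ≤ A / k + K * (t - s) ^ (α / 2) := by
      have h4 : du p c - du p t ≤ K * |c - t| ^ (α / 2) :=
        le_trans (le_abs_self _) hhc
      have h5 : K * |c - t| ^ (α / 2) ≤ K * (t - s) ^ (α / 2) :=
        mul_le_mul_of_nonneg_left hrpow hK
      linarith
    -- assemble
    have hups : u p s ≤ S s := le_csSup (hubd s hs) (Set.mem_range_self p)
    have hupt : u p t ≤ S s + (t - s) * (A / k + K * (t - s) ^ (α / 2)) := by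
      have := mul_le_mul_of_nonneg_left hduc (by linarith : (0:ℝ) ≤ t - s)
      nlinarith [hslope]
    have hSt : S t < u p t + 1 / k := by linarith [hp1]
    have hring : (1:ℝ) / k + (t - s) * (A / k) = (1 + (t - s) * A) / k := by ring
    nlinarith [hkε]
  -- iterate the increment estimate
  intro p t ht
  have hbound : ∀ n : ℕ, 0 < n → S t ≤ K * t * (t / n) ^ (α / 2) := by
    intro n hn
    have hn0 : (0:ℝ) < (n:ℝ) := by exact_mod_cast hn
    have claim : ∀ i : ℕ, i ≤ n → S (i * t / n) ≤ i * (K * (t / n) * (t / n) ^ (α / 2)) := by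
      intro i hi
      induction i with
      | zero => simp [hS0]
      | succ j ihj =>
        have hj : j ≤ n := Nat.le_of_succ_le hi
        have hmem : ∀ m : ℕ, m ≤ n → (m * t / n : ℝ) ∈ Set.Icc (0:ℝ) T := by
          intro m hm
          constructor
          · exact div_nonneg (mul_nonneg (Nat.cast_nonneg m) ht.1) hn0.le
          · have hmn : (m:ℝ) ≤ n := by exact_mod_cast hm
            have : (m:ℝ) * t / n ≤ t := by
              rw [div_le_iff₀ hn0]
              nlinarith [ht.1]
            linarith [ht.2]
        have hstep := key (j * t / n) (hmem j hj) ((j + 1 : ℕ) * t / n) (hmem (j+1) hi)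
          (by
            push_cast
            rw [div_le_div_iff₀ hn0 hn0]
            nlinarith [ht.1])
        have hdiffq : ((j + 1 : ℕ) * t / n : ℝ) - j * t / n = t / n := by
          push_cast; field_simp; ring
        rw [hdiffq] at hstep
        have hih := ihj hj
        have hcast : ((j + 1 : ℕ) : ℝ) = (j : ℝ) + 1 := by push_cast; ring
        rw [hcast] at hstep ⊢
        have hexp : ((j:ℝ) + 1) * (K * (t / n) * (t / n) ^ (α / 2)) =
            (j:ℝ) * (K * (t / n) * (t / n) ^ (α / 2)) + K * (t / n) * (t / n) ^ (α / 2) := by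
          ring
        rw [hexp]
        linarith
    have := claim n le_rfl
    have hnn : ((n:ℝ) * t / n) = t := by field_simp
    rw [hnn] at this
    calc S t ≤ n * (K * (t / n) * (t / n) ^ (α / 2)) := this
      _ = K * t * (t / n) ^ (α / 2) := by field_simp
  -- limit n → ∞
  have hlim : Tendsto (fun n : ℕ => K * t * (t / n) ^ (α / 2)) atTop (nhds 0) := by
    have h1 : Tendsto (fun n : ℕ => (t / n : ℝ)) atTop (nhds 0) :=
      tendsto_const_div_atTop_nhds_zero_nat t
    have h2 : Tendsto (fun n : ℕ => (t / n : ℝ) ^ (α / 2)) atTop (nhds 0) := by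
      have := h1.rpow_const (p := α / 2) (Or.inr hα2.le)
      rwa [Real.zero_rpow (ne_of_gt hα2)] at this
    have h3 := h2.const_mul (K * t)
    have h4 : (K * t) * (0:ℝ) = 0 := by ring
    rw [h4] at h3
    exact h3.congr (fun n => by ring)
  have hSt : S t ≤ 0 := by
    apply ge_of_tendsto hlim
    filter_upwards [eventually_atTop.2 ⟨1, fun n hn => hbound n hn⟩] with n hn using hn
  exact le_trans (le_csSup (hubd t ht) (Set.mem_range_self p)) hSt


/-- Parabolic maximum principle on stochastically complete manifolds
(abstract formulation): stochastic completeness enters through the Omori–Yau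
maximum principle for the time slices (hypotheses `hOYsup`, `hOYinf`), `Δ` is
the (positive) Laplace–Beltrami operator, `a` is bounded with `a ≥ δ > 0`, and
`u` is a `C^{2,α}`-solution (encoded by the uniform bounds on `∂_t u`) of
`(∂_t + aΔ)u = 0` with `u|_{t=0} = 0`. Then `u ≡ 0`. -/
theorem stmt_13 {M : Type*} [Nonempty M] (T α δ A K : ℝ)
    (hT : 0 < T) (hα : α ∈ Set.Ioo (0 : ℝ) 1) (hδ : 0 < δ) (hK : 0 ≤ K)
    (Δ : (M → ℝ) → (M → ℝ)) (a : M → ℝ → ℝ)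
    (ha : ∀ p, ∀ t ∈ Set.Icc 0 T, δ ≤ a p t ∧ a p t ≤ A)
    (u du : M → ℝ → ℝ)
    (hderiv : ∀ p, ∀ t ∈ Set.Icc 0 T, HasDerivAt (u p) (du p t) t)
    (hhold : ∀ p, ∀ t ∈ Set.Icc 0 T, ∀ t' ∈ Set.Icc 0 T,
      |du p t - du p t'| ≤ K * |t - t'| ^ (α / 2))
    (hdbd : ∀ p, ∀ t ∈ Set.Icc 0 T, |du p t| ≤ K)
    (hubd : ∀ t ∈ Set.Icc 0 T, BddAbove (Set.range fun p => u p t) ∧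
      BddBelow (Set.range fun p => u p t))
    (hOYsup : ∀ t ∈ Set.Icc 0 T, ∀ k : ℕ, 0 < k → ∃ p : M,
      u p t > sSup (Set.range fun q => u q t) - 1 / (k : ℝ) ∧
      -Δ (fun q => u q t) p < 1 / (k : ℝ))
    (hOYinf : ∀ t ∈ Set.Icc 0 T, ∀ k : ℕ, 0 < k → ∃ p : M,
      u p t < sInf (Set.range fun q => u q t) + 1 / (k : ℝ) ∧
      -Δ (fun q => u q t) p > -(1 / (k : ℝ)))
    (heq : ∀ p, ∀ t ∈ Set.Icc 0 T, du p t + a p t * Δ (fun q => u q t) p = 0)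
    (h0 : ∀ p, u p 0 = 0) :
    ∀ p, ∀ t ∈ Set.Icc (0 : ℝ) T, u p t = 0 := by
  have hle : ∀ p, ∀ t ∈ Set.Icc (0 : ℝ) T, u p t ≤ 0 :=
    aux_sup13 T α δ A K hT hα hδ hK Δ a ha u du hderiv hhold
      (fun t ht => (hubd t ht).1) hOYsup heq h0
  have hge : ∀ p, ∀ t ∈ Set.Icc (0 : ℝ) T, -(u p t) ≤ 0 := by
    apply aux_sup13 T α δ A K hT hα hδ hK
      (fun f p => -Δ (fun q => -f q) p) a ha
      (fun p t => -u p t) (fun p t => -du p t)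
    · intro p t ht
      exact (hderiv p t ht).neg
    · intro p t ht t' ht'
      have := hhold p t ht t' ht'
      calc |(-du p t) - (-du p t')| = |du p t - du p t'| := by
            rw [neg_sub_neg, abs_sub_comm]
        _ ≤ K * |t - t'| ^ (α / 2) := this
    · intro t ht
      obtain ⟨b, hb⟩ := (hubd t ht).2
      refine ⟨-b, ?_⟩
      rintro x ⟨p, rfl⟩
      simp only [neg_le_neg_iff]
      exact hb (Set.mem_range_self p)
    · intro t ht k hk
      obtain ⟨p, hp1, hp2⟩ := hOYinf t ht k hk
      refine ⟨p, ?_, ?_⟩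
      · rw [sSup_range_neg' (fun q => u q t)]
        linarith
      · simp only [neg_neg]
        linarith
    · intro p t ht
      simp only [neg_neg]
      have := heq p t ht
      linarith
    · intro p
      simp [h0 p]
  intro p t ht
  have h1 := hle p t ht
  have h2 := hge p t ht
  linarith
end

section
/- Envelope derivative inequality via Omori–Yau: let (M,g) be stochastically complete and u ∈ C^{2,α}(M×[0,T]). Then the function u_sup(t) = sup_M u(·,t) is locally Lipschitz, and at every time t of differentiability, ∂_t u_sup(t) ≤ lim_{ε→0⁺} limsup_{k→∞} ∂_t u(p_k(t+ε), t+ε), where (p_k(s)) is an Omori–Yau maximizing sequence for u(·,s) satisfying u(p_k(s),s) > u_sup(s) − 1/k and −Δ_g u(p_k(s),s) < 1/k. The analogous inequality with ≥, liminf and a minimizing sequence holds for u_inf(t) = inf_M u(·,t). -/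
open Filter

/-- Envelope derivative inequality via Omori–Yau: for a `C^{2,α}` function `u`
(encoded by uniform bounds on `∂_t u`), the envelope `u_sup(t) = sup_M u(·,t)`
is locally Lipschitz on `(0,T)`, and at every time of differentiability
`∂_t u_sup(t) ≤ lim_{ε→0⁺} limsup_k ∂_t u(p_k(t+ε), t+ε)` along Omori–Yau
maximizing sequences; the analogous statement with `≥`, `liminf` and
minimizing sequences holds for `u_inf`. -/
theorem stmt_15 {M : Type*} [Nonempty M] (T α K : ℝ) (hT : 0 < T)
    (hα : α ∈ Set.Ioo (0 : ℝ) 1) (hK : 0 ≤ K)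
    (u du : M → ℝ → ℝ)
    (hderiv : ∀ p, ∀ t ∈ Set.Icc 0 T, HasDerivAt (u p) (du p t) t)
    (hhold : ∀ p, ∀ t ∈ Set.Icc 0 T, ∀ t' ∈ Set.Icc 0 T,
      |du p t - du p t'| ≤ K * |t - t'| ^ (α / 2))
    (hdbd : ∀ p, ∀ t ∈ Set.Icc 0 T, |du p t| ≤ K)
    (usup uinf : ℝ → ℝ)
    (husup : ∀ t ∈ Set.Icc 0 T, IsLUB (Set.range fun p => u p t) (usup t))
    (huinf : ∀ t ∈ Set.Icc 0 T, IsGLB (Set.range fun p => u p t) (uinf t))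
    (psup pinf : ℝ → ℕ → M)
    (hpsup : ∀ s ∈ Set.Icc 0 T, ∀ k : ℕ, 0 < k →
      u (psup s k) s > usup s - 1 / (k : ℝ))
    (hpinf : ∀ s ∈ Set.Icc 0 T, ∀ k : ℕ, 0 < k →
      u (pinf s k) s < uinf s + 1 / (k : ℝ)) :
    (∀ t ∈ Set.Ioo (0 : ℝ) T, ∃ ε > 0, ∃ L : NNReal,
      LipschitzOnWith L usup (Set.Ioo (0 : ℝ) T ∩ Metric.ball t ε)) ∧
    (∀ t ∈ Set.Ioo (0 : ℝ) T, ∀ d : ℝ, HasDerivAt usup d t →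
      ∀ Lval : ℝ,
        Tendsto (fun ε => limsup (fun k => du (psup (t + ε) k) (t + ε)) atTop)
          (nhdsWithin 0 (Set.Ioi 0)) (nhds Lval) →
        d ≤ Lval) ∧
    (∀ t ∈ Set.Ioo (0 : ℝ) T, ∃ ε > 0, ∃ L : NNReal,
      LipschitzOnWith L uinf (Set.Ioo (0 : ℝ) T ∩ Metric.ball t ε)) ∧
    (∀ t ∈ Set.Ioo (0 : ℝ) T, ∀ d : ℝ, HasDerivAt uinf d t →
      ∀ Lval : ℝ,
        Tendsto (fun ε => liminf (fun k => du (pinf (t + ε) k) (t + ε)) atTop)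
          (nhdsWithin 0 (Set.Ioi 0)) (nhds Lval) →
        Lval ≤ d) := by
  obtain ⟨hα0, hα1⟩ := hα
  have hα2 : (0:ℝ) ≤ α / 2 := by linarith
  -- Mean value theorem helper
  have hmvt : ∀ p : M, ∀ a b : ℝ, a ∈ Set.Icc 0 T → b ∈ Set.Icc 0 T → a < b →
      ∃ c ∈ Set.Ioo a b, du p c = (u p b - u p a) / (b - a) := by
    intro p a b ha hb hab
    have hIcc : Set.Icc a b ⊆ Set.Icc 0 T := Set.Icc_subset_Icc ha.1 hb.2
    have hIoo : Set.Ioo a b ⊆ Set.Icc 0 T := Set.Ioo_subset_Icc_self.trans hIcc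
    exact exists_hasDerivAt_eq_slope (u p) (du p) hab
      (fun x hx => ((hderiv p x (hIcc hx)).continuousAt).continuousWithinAt)
      (fun x hx => hderiv p x (hIoo hx))
  -- each u p is K-Lipschitz on Icc 0 T
  have hOpLip : ∀ p : M, ∀ a ∈ Set.Icc 0 T, ∀ b ∈ Set.Icc 0 T,
      |u p a - u p b| ≤ K * |a - b| := by
    have key : ∀ p : M, ∀ a ∈ Set.Icc 0 T, ∀ b ∈ Set.Icc 0 T, a < b →
        |u p a - u p b| ≤ K * |a - b| := by
      intro p a ha b hb h
      obtain ⟨c, hc, hceq⟩ := hmvt p a b ha hb h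
      have hc' : c ∈ Set.Icc (0:ℝ) T := ⟨ha.1.trans hc.1.le, hc.2.le.trans hb.2⟩
      have hbd := hdbd p c hc'
      have hba : (0:ℝ) < b - a := sub_pos.2 h
      rw [hceq, abs_div, abs_of_pos hba, div_le_iff₀ hba] at hbd
      calc |u p a - u p b| = |u p b - u p a| := abs_sub_comm _ _
        _ ≤ K * (b - a) := hbd
        _ = K * |a - b| := by rw [abs_sub_comm, abs_of_pos hba]
    intro p a ha b hb
    rcases lt_trichotomy a b with h | h | h
    · exact key p a ha b hb h
    · simp [h]
    · rw [abs_sub_comm, abs_sub_comm a b]; exact key p b hb a ha h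
  -- envelope Lipschitz estimates
  have hEnvLip : ∀ v : ℝ → ℝ,
      (∀ a ∈ Set.Icc (0:ℝ) T, ∀ b ∈ Set.Icc (0:ℝ) T, v a ≤ v b + K * |a - b|) →
      ∀ t ∈ Set.Ioo (0 : ℝ) T, ∃ ε > 0, ∃ L : NNReal,
        LipschitzOnWith L v (Set.Ioo (0 : ℝ) T ∩ Metric.ball t ε) := by
    intro v hv t ht
    refine ⟨1, one_pos, K.toNNReal, LipschitzOnWith.of_dist_le_mul fun a ha b hb => ?_⟩
    have ha' : a ∈ Set.Icc (0:ℝ) T := Set.Ioo_subset_Icc_self ha.1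
    have hb' : b ∈ Set.Icc (0:ℝ) T := Set.Ioo_subset_Icc_self hb.1
    have h1 := hv a ha' b hb'
    have h2 := hv b hb' a ha'
    rw [abs_sub_comm] at h2
    rw [Real.dist_eq, Real.dist_eq, Real.coe_toNNReal K hK, abs_sub_le_iff]
    constructor <;> linarith
  have husup_lip : ∀ a ∈ Set.Icc (0:ℝ) T, ∀ b ∈ Set.Icc (0:ℝ) T,
      usup a ≤ usup b + K * |a - b| := by
    intro a ha b hb
    refine (husup a ha).2 ?_
    rintro x ⟨p, rfl⟩
    have h1 := (husup b hb).1 (Set.mem_range_self p)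
    have h2 := (abs_le.1 (hOpLip p a ha b hb)).2
    linarith
  have huinf_lip : ∀ a ∈ Set.Icc (0:ℝ) T, ∀ b ∈ Set.Icc (0:ℝ) T,
      uinf a ≤ uinf b + K * |a - b| := by
    intro a ha b hb
    have hlb : (uinf a - K * |a - b|) ∈ lowerBounds (Set.range fun p => u p b) := by
      rintro x ⟨p, rfl⟩
      have h1 := (huinf a ha).1 (Set.mem_range_self p)
      have h2 := (abs_le.1 (hOpLip p a ha b hb)).2
      linarith
    have h3 := (huinf b hb).2 hlb
    linarith
  -- convergence of the error terms as ε → 0⁺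
  have hrpow0 : Tendsto (fun ε : ℝ => K * ε ^ (α / 2)) (nhdsWithin 0 (Set.Ioi 0)) (nhds 0) := by
    have hne : α / 2 ≠ 0 := by positivity
    have h1 : ContinuousAt (fun x : ℝ => x ^ (α / 2)) 0 :=
      Real.continuousAt_rpow_const 0 (α / 2) (Or.inr hα2)
    have h2 : Tendsto (fun ε : ℝ => ε ^ (α / 2)) (nhdsWithin 0 (Set.Ioi 0)) (nhds 0) := by
      have := h1.tendsto.mono_left (nhdsWithin_le_nhds (s := Set.Ioi (0:ℝ)))
      simpa [Real.zero_rpow hne] using this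
    simpa using h2.const_mul K
  -- slope convergence helper
  have hslope : ∀ v : ℝ → ℝ, ∀ t d : ℝ, HasDerivAt v d t →
      Tendsto (fun ε : ℝ => (v (t + ε) - v t) / ε) (nhdsWithin 0 (Set.Ioi 0)) (nhds d) := by
    intro v t d hd
    have h1 : Tendsto (fun ε : ℝ => t + ε) (nhdsWithin 0 (Set.Ioi 0))
        (nhdsWithin t {t}ᶜ) := by
      apply tendsto_nhdsWithin_of_tendsto_nhds_of_eventually_within
      · have : Tendsto (fun ε : ℝ => t + ε) (nhds 0) (nhds (t + 0)) :=
          (continuous_const.add continuous_id).tendsto 0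
        simpa using this.mono_left nhdsWithin_le_nhds
      · filter_upwards [self_mem_nhdsWithin] with ε hε
        have : (0:ℝ) < ε := hε
        simp only [Set.mem_compl_iff, Set.mem_singleton_iff]
        intro h
        have : ε = 0 := by linarith [congrArg (fun x => x - t) h, add_sub_cancel_left t ε]
        linarith
    have h2 := (hasDerivAt_iff_tendsto_slope.1 hd).comp h1
    refine h2.congr fun ε => ?_
    simp only [Function.comp_apply, slope_def_field, add_sub_cancel_left]
  -- key derivative bound, sup case
  have hsup_main : ∀ t ∈ Set.Ioo (0 : ℝ) T, ∀ d : ℝ, HasDerivAt usup d t →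
      ∀ Lval : ℝ,
        Tendsto (fun ε => limsup (fun k => du (psup (t + ε) k) (t + ε)) atTop)
          (nhdsWithin 0 (Set.Ioi 0)) (nhds Lval) →
        d ≤ Lval := by
    intro t ht d hd Lval hL
    have htmem : t ∈ Set.Icc (0:ℝ) T := ⟨ht.1.le, ht.2.le⟩
    have hbound : ∀ ε ∈ Set.Ioo (0:ℝ) (T - t),
        (usup (t + ε) - usup t) / ε - K * ε ^ (α / 2)
          ≤ limsup (fun k => du (psup (t + ε) k) (t + ε)) atTop := by
      intro ε hε
      have hε0 : 0 < ε := hε.1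
      have hs : t + ε ∈ Set.Icc (0:ℝ) T := ⟨by linarith [ht.1], by linarith [hε.2]⟩
      have hptk : ∀ k : ℕ, 0 < k →
          (usup (t + ε) - usup t) / ε - K * ε ^ (α / 2) - 1 / (k * ε)
            ≤ du (psup (t + ε) k) (t + ε) := by
        intro k hk
        set p := psup (t + ε) k with hp
        obtain ⟨c, hc, hceq⟩ := hmvt p t (t + ε) htmem hs (by linarith)
        have hcIcc : c ∈ Set.Icc (0:ℝ) T := ⟨htmem.1.trans hc.1.le, hc.2.le.trans hs.2⟩
        have hhold1 := hhold p c hcIcc (t + ε) hs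
        have habs : |c - (t + ε)| ≤ ε := by
          rw [abs_sub_comm, abs_of_pos (by linarith [hc.2] : (0:ℝ) < t + ε - c)]
          linarith [hc.1]
        have hrpow : |c - (t + ε)| ^ (α / 2) ≤ ε ^ (α / 2) :=
          Real.rpow_le_rpow (abs_nonneg _) habs hα2
        have h1 : du p c ≤ du p (t + ε) + K * ε ^ (α / 2) := by
          have hlo := (abs_le.1 hhold1).2
          have hmul := mul_le_mul_of_nonneg_left hrpow hK
          linarith
        have hden : t + ε - t = ε := by ring
        rw [hden] at hceq
        have h2 : (u p (t + ε) - u p t) / ε ≤ du p (t + ε) + K * ε ^ (α / 2) :=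
          hceq ▸ h1
        have h3 : usup (t + ε) - 1 / (k:ℝ) < u p (t + ε) := hpsup (t + ε) hs k hk
        have h4 : u p t ≤ usup t := (husup t htmem).1 (Set.mem_range_self p)
        have hk0 : (0:ℝ) < (k:ℝ) := Nat.cast_pos.2 hk
        have h2' : u p (t + ε) - u p t ≤ (du p (t + ε) + K * ε ^ (α / 2)) * ε :=
          (div_le_iff₀ hε0).1 h2
        have hkε : 1 / ((k:ℝ) * ε) * ε = 1 / (k:ℝ) := by
          field_simp
        rw [sub_le_iff_le_add, sub_le_iff_le_add, div_le_iff₀ hε0]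
        nlinarith
      have hbdd : IsBoundedUnder (· ≤ ·) atTop
          (fun k : ℕ => du (psup (t + ε) k) (t + ε)) :=
        isBoundedUnder_of ⟨K, fun k => (abs_le.1 (hdbd _ _ hs)).2⟩
      have hstep : ∀ n : ℕ, 0 < n →
          (usup (t + ε) - usup t) / ε - K * ε ^ (α / 2) - 1 / (n * ε)
            ≤ limsup (fun k => du (psup (t + ε) k) (t + ε)) atTop := by
        intro n hn
        refine le_limsup_of_frequently_le (Eventually.frequently ?_) hbdd
        filter_upwards [eventually_ge_atTop n] with k hkn
        have hk : 0 < k := lt_of_lt_of_le hn hkn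
        refine le_trans ?_ (hptk k hk)
        have hn0 : (0:ℝ) < (n:ℝ) := Nat.cast_pos.2 hn
        have hk0 : (0:ℝ) < (k:ℝ) := Nat.cast_pos.2 hk
        have : 1 / ((k:ℝ) * ε) ≤ 1 / ((n:ℝ) * ε) := by
          apply one_div_le_one_div_of_le (by positivity)
          have : (n:ℝ) ≤ (k:ℝ) := Nat.cast_le.2 hkn
          nlinarith
        linarith
      have htend : Tendsto (fun n : ℕ =>
          (usup (t + ε) - usup t) / ε - K * ε ^ (α / 2) - 1 / (n * ε)) atTop
          (nhds ((usup (t + ε) - usup t) / ε - K * ε ^ (α / 2))) := by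
        have h0 : Tendsto (fun n : ℕ => 1 / ((n:ℝ) * ε)) atTop (nhds 0) := by
          have h := tendsto_one_div_atTop_nhds_zero_nat.div_const ε
          rw [zero_div] at h
          exact h.congr fun n => by rw [div_div]
        simpa using tendsto_const_nhds.sub h0
      refine le_of_tendsto htend ?_
      filter_upwards [eventually_ge_atTop 1] with n hn
      exact hstep n hn
    have hφ : Tendsto (fun ε : ℝ => (usup (t + ε) - usup t) / ε - K * ε ^ (α / 2))
        (nhdsWithin 0 (Set.Ioi 0)) (nhds d) := by
      simpa using (hslope usup t d hd).sub hrpow0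
    refine le_of_tendsto_of_tendsto hφ hL ?_
    filter_upwards [Ioo_mem_nhdsGT_of_mem ⟨le_refl (0:ℝ), sub_pos.2 ht.2⟩] with ε hε
    exact hbound ε hε
  -- key derivative bound, inf case
  have hinf_main : ∀ t ∈ Set.Ioo (0 : ℝ) T, ∀ d : ℝ, HasDerivAt uinf d t →
      ∀ Lval : ℝ,
        Tendsto (fun ε => liminf (fun k => du (pinf (t + ε) k) (t + ε)) atTop)
          (nhdsWithin 0 (Set.Ioi 0)) (nhds Lval) →
        Lval ≤ d := by
    intro t ht d hd Lval hL
    have htmem : t ∈ Set.Icc (0:ℝ) T := ⟨ht.1.le, ht.2.le⟩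
    have hbound : ∀ ε ∈ Set.Ioo (0:ℝ) (T - t),
        liminf (fun k => du (pinf (t + ε) k) (t + ε)) atTop
          ≤ (uinf (t + ε) - uinf t) / ε + K * ε ^ (α / 2) := by
      intro ε hε
      have hε0 : 0 < ε := hε.1
      have hs : t + ε ∈ Set.Icc (0:ℝ) T := ⟨by linarith [ht.1], by linarith [hε.2]⟩
      have hptk : ∀ k : ℕ, 0 < k →
          du (pinf (t + ε) k) (t + ε)
            ≤ (uinf (t + ε) - uinf t) / ε + K * ε ^ (α / 2) + 1 / (k * ε) := by
        intro k hk
        set p := pinf (t + ε) k with hp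
        obtain ⟨c, hc, hceq⟩ := hmvt p t (t + ε) htmem hs (by linarith)
        have hcIcc : c ∈ Set.Icc (0:ℝ) T := ⟨htmem.1.trans hc.1.le, hc.2.le.trans hs.2⟩
        have hhold1 := hhold p c hcIcc (t + ε) hs
        have habs : |c - (t + ε)| ≤ ε := by
          rw [abs_sub_comm, abs_of_pos (by linarith [hc.2] : (0:ℝ) < t + ε - c)]
          linarith [hc.1]
        have hrpow : |c - (t + ε)| ^ (α / 2) ≤ ε ^ (α / 2) :=
          Real.rpow_le_rpow (abs_nonneg _) habs hα2
        have h1 : du p (t + ε) ≤ du p c + K * ε ^ (α / 2) := by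
          have hlo := (abs_le.1 hhold1).1
          have hmul := mul_le_mul_of_nonneg_left hrpow hK
          linarith
        have hden : t + ε - t = ε := by ring
        rw [hden] at hceq
        have h2 : du p (t + ε) ≤ (u p (t + ε) - u p t) / ε + K * ε ^ (α / 2) :=
          hceq ▸ h1
        have h3 : u p (t + ε) < uinf (t + ε) + 1 / (k:ℝ) := hpinf (t + ε) hs k hk
        have h4 : uinf t ≤ u p t := (huinf t htmem).1 (Set.mem_range_self p)
        have hk0 : (0:ℝ) < (k:ℝ) := Nat.cast_pos.2 hk
        have h5 : (u p (t + ε) - u p t) / ε ≤ (uinf (t + ε) + 1 / (k:ℝ) - uinf t) / ε :=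
          (div_le_div_iff_of_pos_right hε0).2 (by linarith)
        have h6 : (uinf (t + ε) + 1 / (k:ℝ) - uinf t) / ε
            = (uinf (t + ε) - uinf t) / ε + 1 / ((k:ℝ) * ε) := by
          field_simp
          ring
        rw [h6] at h5
        linarith
      have hbdd : IsBoundedUnder (· ≥ ·) atTop
          (fun k : ℕ => du (pinf (t + ε) k) (t + ε)) :=
        isBoundedUnder_of ⟨-K, fun k => neg_le_of_abs_le (hdbd _ _ hs)⟩
      have hstep : ∀ n : ℕ, 0 < n →
          liminf (fun k => du (pinf (t + ε) k) (t + ε)) atTop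
            ≤ (uinf (t + ε) - uinf t) / ε + K * ε ^ (α / 2) + 1 / (n * ε) := by
        intro n hn
        refine liminf_le_of_frequently_le (Eventually.frequently ?_) hbdd
        filter_upwards [eventually_ge_atTop n] with k hkn
        have hk : 0 < k := lt_of_lt_of_le hn hkn
        refine (hptk k hk).trans ?_
        have hn0 : (0:ℝ) < (n:ℝ) := Nat.cast_pos.2 hn
        have hk0 : (0:ℝ) < (k:ℝ) := Nat.cast_pos.2 hk
        have : 1 / ((k:ℝ) * ε) ≤ 1 / ((n:ℝ) * ε) := by
          apply one_div_le_one_div_of_le (by positivity)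
          have : (n:ℝ) ≤ (k:ℝ) := Nat.cast_le.2 hkn
          nlinarith
        linarith
      have htend : Tendsto (fun n : ℕ =>
          (uinf (t + ε) - uinf t) / ε + K * ε ^ (α / 2) + 1 / (n * ε)) atTop
          (nhds ((uinf (t + ε) - uinf t) / ε + K * ε ^ (α / 2))) := by
        have h0 : Tendsto (fun n : ℕ => 1 / ((n:ℝ) * ε)) atTop (nhds 0) := by
          have h := tendsto_one_div_atTop_nhds_zero_nat.div_const ε
          rw [zero_div] at h
          exact h.congr fun n => by rw [div_div]
        simpa using tendsto_const_nhds.add h0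
      refine ge_of_tendsto htend ?_
      filter_upwards [eventually_ge_atTop 1] with n hn
      exact hstep n hn
    have hφ : Tendsto (fun ε : ℝ => (uinf (t + ε) - uinf t) / ε + K * ε ^ (α / 2))
        (nhdsWithin 0 (Set.Ioi 0)) (nhds d) := by
      simpa using (hslope uinf t d hd).add hrpow0
    refine le_of_tendsto_of_tendsto hL hφ ?_
    filter_upwards [Ioo_mem_nhdsGT_of_mem ⟨le_refl (0:ℝ), sub_pos.2 ht.2⟩] with ε hε
    exact hbound ε hε
  exact ⟨hEnvLip usup husup_lip, hsup_main, hEnvLip uinf huinf_lip, hinf_main⟩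
end

section
/- Hölder-seminorm bound for the boundary bump functions: for ε ∈ (0,1) and α ∈ (0,1), the function φ(x,y,z) = σ(x/ε)·σ(x‖y−ȳ‖)·σ(ε x²‖z−z̄‖) on the half-cube [0,1)×(−1,1)^b×(−1,1)^f satisfies |φ(p) − φ(p')| ≤ C ε^{−α} (|x−x'|^α + (x+x')^α‖y−y'‖^α + (x+x')^{2α}‖z−z'‖^α) for all p=(x,y,z), p'=(x',y',z'), with C independent of ε and of the centers ȳ, z̄; consequently [φ]_{α,Φ} ≤ C' ε^{−α} with respect to the Φ-distance d_{2,Φ}. -/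
/-!
Since `σ` takes values in `[0, 1]` and is `L`-Lipschitz, `|σ u - σ u'| ≤ min 1 (L |u - u'|)`,
which is at most `(L |u - u'|) ^ α`. The difference of the triple products is bounded by the sum
of the differences of the three factors, and the arguments of the factors move by at most
`|x - x'| / ε`, `R |x - x'| + (x + x') ‖y - y'‖` and `R' |x - x'| + (x + x')² ‖z - z'‖`, where
`R, R'` bound `‖y - ȳ‖, ‖z - z̄‖` on the cube. Subadditivity of `t ↦ t ^ α` then gives the first
bound, with `ε ^ (-α) ≥ 1` absorbing the constants. Each of `|x - x'|`, `(x + x') ‖y - y'‖` and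
`(x + x')² ‖z - z'‖` is at most `d_{2,Φ}`, which gives the second.
-/

open Real

lemma EuclideanSpace.norm_sub_le_two_mul_sqrt_card {ι : Type*} [Fintype ι]
    {v w : EuclideanSpace ℝ ι} (hv : ∀ i, |v i| ≤ 1) (hw : ∀ i, |w i| ≤ 1) :
    ‖v - w‖ ≤ 2 * √(Fintype.card ι) := by
  have hnorm : ∀ u : EuclideanSpace ℝ ι, (∀ i, |u i| ≤ 1) → ‖u‖ ≤ √(Fintype.card ι) := by
    intro u hu
    rw [EuclideanSpace.norm_eq]
    gcongr
    calc ∑ i, ‖u i‖ ^ 2 ≤ ∑ _i : ι, (1 : ℝ) := by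
          gcongr with i
          rw [norm_eq_abs, sq_le_one_iff_abs_le_one, abs_abs]
          exact hu i
      _ = Fintype.card ι := by simp
  linarith [norm_sub_le v w, hnorm v hv, hnorm w hw]

lemma rpow_add_mul_rpow_add_mul_rpow_le {α d s Y Z : ℝ} (hα : 0 ≤ α) (hd : 0 ≤ d)
    (hs : 0 ≤ s) (hY : 0 ≤ Y) (hZ : 0 ≤ Z) :
    d ^ α + s ^ α * Y ^ α + s ^ (2 * α) * Z ^ α ≤
      3 * √(d ^ 2 + s ^ 2 * Y ^ 2 + s ^ 4 * Z ^ 2) ^ α := by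
  set Q := d ^ 2 + s ^ 2 * Y ^ 2 + s ^ 4 * Z ^ 2
  have key : ∀ t, 0 ≤ t → t ^ 2 ≤ Q → t ^ α ≤ √Q ^ α := fun t ht h =>
    rpow_le_rpow ht ((le_sqrt ht (by positivity)).2 h) hα
  have h1 : 0 ≤ d ^ 2 := by positivity
  have h2 : 0 ≤ s ^ 2 * Y ^ 2 := by positivity
  have h3 : 0 ≤ s ^ 4 * Z ^ 2 := by positivity
  rw [← mul_rpow hs hY, rpow_mul hs, rpow_two, ← mul_rpow (by positivity) hZ]
  linarith [key d hd (by linarith), key (s * Y) (by positivity) (by linarith [mul_pow s Y 2]),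
    key (s ^ 2 * Z) (by positivity) (by linarith [show (s ^ 2 * Z) ^ 2 = s ^ 4 * Z ^ 2 by ring])]

lemma abs_mul_sub_mul_le (a b a' b' : ℝ) :
    |a * b - a' * b'| ≤ |a - a'| * |b| + |a'| * |b - b'| := by
  calc |a * b - a' * b'| = |(a - a') * b + a' * (b - b')| := by ring_nf
    _ ≤ |a - a'| * |b| + |a'| * |b - b'| := by
        simpa only [abs_mul] using abs_add_le ((a - a') * b) (a' * (b - b'))

lemma abs_mul_mul_sub_mul_mul_le {a b c a' b' c' : ℝ} (hb : |b| ≤ 1) (hc : |c| ≤ 1)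
    (ha' : |a'| ≤ 1) (hb' : |b'| ≤ 1) :
    |a * b * c - a' * b' * c'| ≤ |a - a'| + |b - b'| + |c - c'| := by
  have hab : |a * b - a' * b'| ≤ |a - a'| + |b - b'| := by
    nlinarith [abs_mul_sub_mul_le a b a' b', abs_nonneg (a - a'), abs_nonneg (b - b')]
  have ha'b' : |a' * b'| ≤ 1 := by
    rw [abs_mul]; nlinarith [abs_nonneg a', abs_nonneg b']
  nlinarith [abs_mul_sub_mul_le (a * b) c (a' * b') c', abs_nonneg (a * b - a' * b'),
    abs_nonneg (c - c')]

lemma mul_add_add_le_of_one_le {P A B D U V : ℝ} (hP : 1 ≤ P) (hA : 0 ≤ A) (hB : 0 ≤ B)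
    (hD : 0 ≤ D) (hU : 0 ≤ U) (hV : 0 ≤ V) :
    P * D + (A * D + U) + (B * D + V) ≤ (1 + A + B) * P * (D + U + V) := by
  nlinarith [mul_nonneg (sub_nonneg.2 hP) (add_nonneg hU hV),
    mul_nonneg (mul_nonneg (add_nonneg hA hB) (sub_nonneg.2 hP)) hD,
    mul_nonneg (mul_nonneg (add_nonneg hA hB) (zero_le_one.trans hP)) (add_nonneg hU hV)]

section BoundedLipschitz

variable {σ : ℝ → ℝ} {L : NNReal} {α : ℝ}

lemma LipschitzWith.abs_sub_le_mul_abs_rpow (hσ : LipschitzWith L σ)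
    (hσ1 : ∀ a c, |σ a - σ c| ≤ 1) (hα0 : 0 ≤ α) (hα1 : α ≤ 1) (a c : ℝ) :
    |σ a - σ c| ≤ (L * |a - c|) ^ α := by
  have hLip : |σ a - σ c| ≤ L * |a - c| := by simpa only [dist_eq] using hσ.dist_le_mul a c
  rcases le_total (L * |a - c|) 1 with h | h
  · exact hLip.trans (self_le_rpow_of_le_one (by positivity) h hα1)
  · exact (hσ1 a c).trans (one_le_rpow h hα0)

lemma abs_sub_le_rpow_add_rpow (hσ : LipschitzWith L σ) (hσ1 : ∀ a c, |σ a - σ c| ≤ 1)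
    (hα0 : 0 ≤ α) (hα1 : α ≤ 1) {u u' p q : ℝ} (hp : 0 ≤ p) (hq : 0 ≤ q)
    (h : |u - u'| ≤ p + q) :
    |σ u - σ u'| ≤ L ^ α * (p ^ α + q ^ α) := by
  calc |σ u - σ u'| ≤ (L * |u - u'|) ^ α := hσ.abs_sub_le_mul_abs_rpow hσ1 hα0 hα1 u u'
    _ ≤ (L * (p + q)) ^ α := by gcongr
    _ ≤ L ^ α * (p ^ α + q ^ α) := by
        rw [mul_rpow L.coe_nonneg (by positivity)]
        gcongr
        exact rpow_add_le_add_rpow hp hq hα0 hα1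

lemma abs_sub_le_of_mul_norm_sub {E : Type*} [SeminormedAddCommGroup E]
    (hσ : LipschitzWith L σ) (hσ1 : ∀ a c, |σ a - σ c| ≤ 1) (hα0 : 0 ≤ α) (hα1 : α ≤ 1)
    {a a' R δ t : ℝ} {y y' c : E} (hy : ‖y - c‖ ≤ R) (hδ : |a - a'| ≤ δ) (ha' : 0 ≤ a')
    (ha't : a' ≤ t) :
    |σ (a * ‖y - c‖) - σ (a' * ‖y' - c‖)| ≤ L ^ α * ((R * δ) ^ α + (t * ‖y - y'‖) ^ α) := by
  have hR : 0 ≤ R := (norm_nonneg _).trans hy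
  have hδ0 : 0 ≤ δ := (abs_nonneg _).trans hδ
  have ht : 0 ≤ t := ha'.trans ha't
  have hnorm : |‖y - c‖ - ‖y' - c‖| ≤ ‖y - y'‖ := by
    simpa only [sub_sub_sub_cancel_right] using abs_norm_sub_norm_le (y - c) (y' - c)
  refine abs_sub_le_rpow_add_rpow hσ hσ1 hα0 hα1 (mul_nonneg hR hδ0)
    (mul_nonneg ht (norm_nonneg _)) ?_
  calc |a * ‖y - c‖ - a' * ‖y' - c‖|
      ≤ |a - a'| * |‖y - c‖| + |a'| * |‖y - c‖ - ‖y' - c‖| := abs_mul_sub_mul_le _ _ _ _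
    _ ≤ δ * R + t * ‖y - y'‖ := by
        rw [abs_norm, abs_of_nonneg ha']
        exact add_le_add (mul_le_mul hδ hy (norm_nonneg _) hδ0)
          (mul_le_mul ha't hnorm (abs_nonneg _) ht)
    _ = R * δ + t * ‖y - y'‖ := by ring

lemma abs_sub_le_of_mul_sq_mul_norm_sub {E : Type*} [SeminormedAddCommGroup E]
    (hσ : LipschitzWith L σ) (hσ1 : ∀ a c, |σ a - σ c| ≤ 1) (hα0 : 0 ≤ α) (hα1 : α ≤ 1)
    {ε x x' R : ℝ} {z z' c : E} (hε : ε ∈ Set.Ioc (0 : ℝ) 1) (hx : x ∈ Set.Icc (0 : ℝ) 1)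
    (hx' : x' ∈ Set.Icc (0 : ℝ) 1) (hz : ‖z - c‖ ≤ R) :
    |σ (ε * x ^ 2 * ‖z - c‖) - σ (ε * x' ^ 2 * ‖z' - c‖)| ≤
      L ^ α * ((2 * R) ^ α * |x - x'| ^ α + (x + x') ^ (2 * α) * ‖z - z'‖ ^ α) := by
  obtain ⟨hε0, hε1⟩ := hε
  obtain ⟨hx0, hx1⟩ := hx
  obtain ⟨hx'0, hx'1⟩ := hx'
  have hs : 0 ≤ x + x' := by positivity
  have hδ : |ε * x ^ 2 - ε * x' ^ 2| ≤ 2 * |x - x'| := by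
    rw [← mul_sub, sq_sub_sq, abs_mul, abs_mul, abs_of_pos hε0, abs_of_nonneg hs]
    have : ε * (x + x') ≤ 2 := by nlinarith
    nlinarith [abs_nonneg (x - x')]
  have ht : ε * x' ^ 2 ≤ (x + x') ^ 2 := by nlinarith
  have h := abs_sub_le_of_mul_norm_sub (y' := z') hσ hσ1 hα0 hα1 hz hδ (by positivity) ht
  rwa [← mul_assoc, mul_comm R 2, mul_rpow (by linarith [norm_nonneg (z - c)]) (abs_nonneg _),
    mul_rpow (by positivity) (norm_nonneg _), ← rpow_two (x + x'), ← rpow_mul hs] at h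

lemma abs_bump_sub_le {E F : Type*} [SeminormedAddCommGroup E] [SeminormedAddCommGroup F]
    (hσ : LipschitzWith L σ) (hσrange : ∀ t, σ t ∈ Set.Icc (0 : ℝ) 1) (hα0 : 0 ≤ α)
    (hα1 : α ≤ 1) {Ry Rz C ε x x' : ℝ} {y y' ybar : E} {z z' zbar : F}
    (hC : L ^ α * (1 + Ry ^ α + (2 * Rz) ^ α) ≤ C) (hε : ε ∈ Set.Ioc (0 : ℝ) 1)
    (hx : x ∈ Set.Icc (0 : ℝ) 1) (hx' : x' ∈ Set.Icc (0 : ℝ) 1)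
    (hy : ‖y - ybar‖ ≤ Ry) (hz : ‖z - zbar‖ ≤ Rz) :
    |σ (x / ε) * σ (x * ‖y - ybar‖) * σ (ε * x ^ 2 * ‖z - zbar‖) -
        σ (x' / ε) * σ (x' * ‖y' - ybar‖) * σ (ε * x' ^ 2 * ‖z' - zbar‖)| ≤
      C * ε ^ (-α) * (|x - x'| ^ α + (x + x') ^ α * ‖y - y'‖ ^ α +
        (x + x') ^ (2 * α) * ‖z - z'‖ ^ α) := by
  have hσ1 : ∀ a c, |σ a - σ c| ≤ 1 := fun a c =>
    abs_sub_le_of_nonneg_of_le (hσrange a).1 (hσrange a).2 (hσrange c).1 (hσrange c).2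
  set d := |x - x'|
  set s := x + x'
  have hd : 0 ≤ d := abs_nonneg _
  have hs : 0 ≤ s := add_nonneg hx.1 hx'.1
  have hRy : 0 ≤ Ry := (norm_nonneg _).trans hy
  have hRz : 0 ≤ Rz := (norm_nonneg _).trans hz
  have hT1 : |σ (x / ε) - σ (x' / ε)| ≤ L ^ α * (ε ^ (-α) * d ^ α) := by
    have h := hσ.abs_sub_le_mul_abs_rpow hσ1 hα0 hα1 (x / ε) (x' / ε)
    rw [rpow_neg hε.1.le, ← div_eq_inv_mul]
    rwa [← sub_div, abs_div, abs_of_pos hε.1, mul_rpow L.coe_nonneg (div_nonneg hd hε.1.le),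
      div_rpow hd hε.1.le] at h
  have hT2 : |σ (x * ‖y - ybar‖) - σ (x' * ‖y' - ybar‖)| ≤
      L ^ α * (Ry ^ α * d ^ α + s ^ α * ‖y - y'‖ ^ α) := by
    have h := abs_sub_le_of_mul_norm_sub (a := x) (y' := y') hσ hσ1 hα0 hα1 hy le_rfl hx'.1
      (le_add_of_nonneg_left hx.1)
    rwa [mul_rpow hRy hd, mul_rpow hs (norm_nonneg _)] at h
  have hT3 := abs_sub_le_of_mul_sq_mul_norm_sub (z' := z') hσ hσ1 hα0 hα1 hε hx hx' hz
  have hσabs : ∀ t, |σ t| ≤ 1 := fun t => abs_le.2 ⟨by linarith [(hσrange t).1], (hσrange t).2⟩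
  have hP : 1 ≤ ε ^ (-α) := one_le_rpow_of_pos_of_le_one_of_nonpos hε.1 hε.2 (by linarith)
  set P := ε ^ (-α)
  set A := Ry ^ α
  set B := (2 * Rz) ^ α
  set D := d ^ α
  set U := s ^ α * ‖y - y'‖ ^ α
  set V := s ^ (2 * α) * ‖z - z'‖ ^ α
  have hsum : P * D + (A * D + U) + (B * D + V) ≤ (1 + A + B) * P * (D + U + V) :=
    mul_add_add_le_of_one_le hP (by positivity) (by positivity) (by positivity) (by positivity)
      (by positivity)
  calc _ ≤ |σ (x / ε) - σ (x' / ε)| + |σ (x * ‖y - ybar‖) - σ (x' * ‖y' - ybar‖)| +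
          |σ (ε * x ^ 2 * ‖z - zbar‖) - σ (ε * x' ^ 2 * ‖z' - zbar‖)| :=
        abs_mul_mul_sub_mul_mul_le (hσabs _) (hσabs _) (hσabs _) (hσabs _)
    _ ≤ L ^ α * (P * D + (A * D + U) + (B * D + V)) := by
        rw [mul_add, mul_add]; gcongr
    _ ≤ L ^ α * (1 + A + B) * P * (D + U + V) := by
        rw [mul_assoc, mul_assoc, ← mul_assoc (1 + A + B)]; gcongr
    _ ≤ C * P * (D + U + V) := by gcongr

end BoundedLipschitz

theorem stmt_17_general (b f : ℕ) (α : ℝ) (hα : α ∈ Set.Ioo (0 : ℝ) 1)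
    (σ : ℝ → ℝ) (L : NNReal) (hσLip : LipschitzWith L σ)
    (hσrange : ∀ x : ℝ, σ x ∈ Set.Icc (0 : ℝ) 1) :
    ∃ C > (0 : ℝ), ∃ C' > (0 : ℝ), ∀ ε ∈ Set.Ioo (0 : ℝ) 1,
      ∀ (ybar : EuclideanSpace ℝ (Fin b)) (zbar : EuclideanSpace ℝ (Fin f)),
      (∀ i, |ybar i| ≤ 1) → (∀ i, |zbar i| ≤ 1) →
      ∀ x x' : ℝ, x ∈ Set.Ico (0 : ℝ) 1 → x' ∈ Set.Ico (0 : ℝ) 1 →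
      ∀ (y y' : EuclideanSpace ℝ (Fin b)) (z z' : EuclideanSpace ℝ (Fin f)),
      (∀ i, |y i| < 1) → (∀ i, |y' i| < 1) → (∀ i, |z i| < 1) → (∀ i, |z' i| < 1) →
      |σ (x / ε) * σ (x * ‖y - ybar‖) * σ (ε * x ^ 2 * ‖z - zbar‖) -
          σ (x' / ε) * σ (x' * ‖y' - ybar‖) * σ (ε * x' ^ 2 * ‖z' - zbar‖)| ≤
        C * ε ^ (-α) * (|x - x'| ^ α + (x + x') ^ α * ‖y - y'‖ ^ α +
          (x + x') ^ (2 * α) * ‖z - z'‖ ^ α) ∧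
      |σ (x / ε) * σ (x * ‖y - ybar‖) * σ (ε * x ^ 2 * ‖z - zbar‖) -
          σ (x' / ε) * σ (x' * ‖y' - ybar‖) * σ (ε * x' ^ 2 * ‖z' - zbar‖)| ≤
        C' * ε ^ (-α) *
          (Real.sqrt (|x - x'| ^ 2 + (x + x') ^ 2 * ‖y - y'‖ ^ 2 +
            (x + x') ^ 4 * ‖z - z'‖ ^ 2)) ^ α := by
  set Ry := 2 * √(Fintype.card (Fin b))
  set Rz := 2 * √(Fintype.card (Fin f))
  set C := 1 + L ^ α * (1 + Ry ^ α + (2 * Rz) ^ α)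
  refine ⟨C, by positivity, 3 * C, by positivity, ?_⟩
  rintro ε ⟨hε0, hε1⟩ ybar zbar hybar hzbar x x' hx hx' y y' z z' hy _ hz _
  have hφ := abs_bump_sub_le (y' := y') (z' := z') hσLip hσrange hα.1.le hα.2.le
    (le_add_of_nonneg_left zero_le_one) ⟨hε0, hε1.le⟩ (Set.Ico_subset_Icc_self hx)
    (Set.Ico_subset_Icc_self hx')
    (EuclideanSpace.norm_sub_le_two_mul_sqrt_card (fun i => (hy i).le) hybar)
    (EuclideanSpace.norm_sub_le_two_mul_sqrt_card (fun i => (hz i).le) hzbar)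
  refine ⟨hφ, hφ.trans ?_⟩
  calc _ ≤ C * ε ^ (-α) * (3 * √(|x - x'| ^ 2 + (x + x') ^ 2 * ‖y - y'‖ ^ 2 +
          (x + x') ^ 4 * ‖z - z'‖ ^ 2) ^ α) := by
        gcongr C * ε ^ (-α) * ?_
        exact rpow_add_mul_rpow_add_mul_rpow_le hα.1.le (abs_nonneg _)
          (add_nonneg hx.1 hx'.1) (norm_nonneg _) (norm_nonneg _)
    _ = _ := by ring

/-- Hölder-seminorm bound for the boundary bump functions: there are constants
`C, C' > 0`, independent of `ε ∈ (0,1)` and of the centers `ȳ, z̄`, such that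
`φ(x,y,z) = σ(x/ε)·σ(x‖y−ȳ‖)·σ(εx²‖z−z̄‖)` on the half-cube satisfies
`|φ(p)−φ(p')| ≤ C ε^{−α}(|x−x'|^α + (x+x')^α‖y−y'‖^α + (x+x')^{2α}‖z−z'‖^α)`,
and hence `|φ(p)−φ(p')| ≤ C' ε^{−α} d_{2,Φ}(p,p')^α`. -/
theorem stmt_17 (b f : ℕ) (α : ℝ) (hα : α ∈ Set.Ioo (0 : ℝ) 1)
    (σ : ℝ → ℝ) (L : NNReal) (hσLip : LipschitzWith L σ)
    (hσrange : ∀ x : ℝ, σ x ∈ Set.Icc (0 : ℝ) 1)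
    (hσ1 : ∀ x ∈ Set.Icc (0 : ℝ) (1 / 2), σ x = 1)
    (hσ0 : ∀ x : ℝ, 1 ≤ x → σ x = 0) :
    ∃ C > (0 : ℝ), ∃ C' > (0 : ℝ), ∀ ε ∈ Set.Ioo (0 : ℝ) 1,
      ∀ (ybar : EuclideanSpace ℝ (Fin b)) (zbar : EuclideanSpace ℝ (Fin f)),
      (∀ i, |ybar i| ≤ 1) → (∀ i, |zbar i| ≤ 1) →
      ∀ x x' : ℝ, x ∈ Set.Ico (0 : ℝ) 1 → x' ∈ Set.Ico (0 : ℝ) 1 →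
      ∀ (y y' : EuclideanSpace ℝ (Fin b)) (z z' : EuclideanSpace ℝ (Fin f)),
      (∀ i, |y i| < 1) → (∀ i, |y' i| < 1) → (∀ i, |z i| < 1) → (∀ i, |z' i| < 1) →
      |σ (x / ε) * σ (x * ‖y - ybar‖) * σ (ε * x ^ 2 * ‖z - zbar‖) -
          σ (x' / ε) * σ (x' * ‖y' - ybar‖) * σ (ε * x' ^ 2 * ‖z' - zbar‖)| ≤
        C * ε ^ (-α) * (|x - x'| ^ α + (x + x') ^ α * ‖y - y'‖ ^ α +
          (x + x') ^ (2 * α) * ‖z - z'‖ ^ α) ∧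
      |σ (x / ε) * σ (x * ‖y - ybar‖) * σ (ε * x ^ 2 * ‖z - zbar‖) -
          σ (x' / ε) * σ (x' * ‖y' - ybar‖) * σ (ε * x' ^ 2 * ‖z' - zbar‖)| ≤
        C' * ε ^ (-α) *
          (Real.sqrt (|x - x'| ^ 2 + (x + x') ^ 2 * ‖y - y'‖ ^ 2 +
            (x + x') ^ 4 * ‖z - z'‖ ^ 2)) ^ α :=
  stmt_17_general b f α hα σ L hσLip hσrange
end

section
/- Fixed-point short-time existence (abstract version): let (E, ‖·‖) be a Banach space with a norm depending on T (the spaces x^γC^{2,α}_Φ(M×[0,T])), let Q_T : F_T → E_T be bounded linear solution operators with ‖Q_T‖ ≤ K uniformly in T ≤ T₁, and let F = F₁ + F₂ satisfy, on the ball {‖u‖ ≤ μ}: ‖F₁(u)−F₁(u')‖_{F¹} ≤ C_μ‖u−u'‖, ‖F₁(u)‖_{F¹} ≤ C_μ, ‖F₂(u)−F₂(u')‖_{F} ≤ C_μ max(‖u‖,‖u'‖)‖u−u'‖, ‖F₂(u)‖_F ≤ C_μ‖u‖², where the inclusion of F¹-data gains a factor √T in E. Then for T' > 0 small enough the map u ↦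 Q_{T'}(F(u)) is a contraction on a small closed ball of E_{T'}, and hence has a unique fixed point u*, which solves (∂_t + aΔ)u = F(u), u|_{t=0} = 0. -/
/-! The Duhamel-type map `u ↦ Q (ι (F₁ u) + F₂ u)` is estimated on the ball of radius `r` by
`K C (√T + r²)` and its Lipschitz constant by `K C (√T + r)`: the `F₁`-part is small because `ι`
gains `√T`, the `F₂`-part because it is quadratic. Choosing first `r` and then `T` small makes the
map a `1/2`-contraction of the closed ball into itself, and Banach's fixed point theorem applies. -/

open Set Metric

theorem exists_unique_fixedPoint_of_lipschitzOnWith {α : Type*} [MetricSpace α] {f : α → α}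
    {s : Set α} {K : NNReal} (hK : K < 1) (hsc : IsComplete s) (hs : s.Nonempty)
    (hsf : MapsTo f s s) (hf : LipschitzOnWith K f s) :
    ∃ x ∈ s, f x = x ∧ ∀ y ∈ s, f y = y → y = x := by
  have hc : ContractingWith K (hsf.restrict f s s) := ⟨hK, hf.mapsToRestrict hsf⟩
  obtain ⟨x₀, hx₀⟩ := hs
  obtain ⟨x, hxs, hfx, -⟩ := hc.exists_fixedPoint' hsc hsf hx₀ (edist_ne_top _ _)
  refine ⟨x, hxs, hfx, fun y hys hfy => ?_⟩
  have := hc.fixedPoint_unique' (x := ⟨y, hys⟩) (y := ⟨x, hxs⟩)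
    (Subtype.ext hfy) (Subtype.ext hfx)
  exact congrArg Subtype.val this

theorem exists_unique_fixedPoint_of_norm_le {E : Type*} [NormedAddCommGroup E] [CompleteSpace E]
    {f : E → E} {r θ : ℝ} (hr : 0 ≤ r) (hθ : θ < 1)
    (hmaps : ∀ u : E, ‖u‖ ≤ r → ‖f u‖ ≤ r)
    (hcontr : ∀ u u' : E, ‖u‖ ≤ r → ‖u'‖ ≤ r → ‖f u - f u'‖ ≤ θ * ‖u - u'‖) :
    ∃ x : E, ‖x‖ ≤ r ∧ x = f x ∧ ∀ y : E, ‖y‖ ≤ r → y = f y → y = x := by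
  have hsf : MapsTo f (closedBall 0 r) (closedBall 0 r) := fun u hu => by
    simpa using hmaps u (by simpa using hu)
  have hf : LipschitzOnWith θ.toNNReal f (closedBall 0 r) :=
    LipschitzOnWith.of_dist_le_mul fun u hu u' hu' => by
      rw [dist_eq_norm, dist_eq_norm]
      exact (hcontr u u' (by simpa using hu) (by simpa using hu')).trans
        (by gcongr; exact Real.le_coe_toNNReal θ)
  obtain ⟨x, hx, hfx, huniq⟩ := exists_unique_fixedPoint_of_lipschitzOnWith
    (Real.toNNReal_lt_one.mpr hθ) isClosed_closedBall.isComplete ⟨0, by simpa using hr⟩ hsf hf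
  exact ⟨x, by simpa using hx, hfx.symm,
    fun y hy hfy => huniq y (by simpa using hy) hfy.symm⟩

section Estimates

variable {𝕜 E D D₁ : Type*} [NontriviallyNormedField 𝕜]
  [NormedAddCommGroup E] [NormedSpace 𝕜 E] [NormedAddCommGroup D] [NormedSpace 𝕜 D]
  [NormedAddCommGroup D₁] [NormedSpace 𝕜 D₁]
  {Q : D →L[𝕜] E} {ι : D₁ →L[𝕜] D} {F₁ : E → D₁} {F₂ : E → D} {K σ C : ℝ}

theorem norm_apply_add_le (hQ : ‖Q‖ ≤ K) (hσ : 0 ≤ σ) (hι : ∀ v, ‖ι v‖ ≤ σ * ‖v‖)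
    {a : D₁} {b : D} {A B : ℝ} (ha : ‖a‖ ≤ A) (hb : ‖b‖ ≤ B) :
    ‖Q (ι a + b)‖ ≤ K * (σ * A + B) :=
  calc ‖Q (ι a + b)‖ ≤ ‖Q‖ * ‖ι a + b‖ := Q.le_opNorm _
    _ ≤ K * (σ * A + B) := by
      gcongr
      · exact (norm_nonneg Q).trans hQ
      · exact (norm_add_le _ _).trans (add_le_add ((hι a).trans (by gcongr)) hb)

theorem norm_apply_add_le_of_bounds (hQ : ‖Q‖ ≤ K) (hσ : 0 ≤ σ) (hι : ∀ v, ‖ι v‖ ≤ σ * ‖v‖)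
    {u : E} (hF₁ : ‖F₁ u‖ ≤ C) (hF₂ : ‖F₂ u‖ ≤ C * ‖u‖ ^ 2) :
    ‖Q (ι (F₁ u) + F₂ u)‖ ≤ K * C * (σ + ‖u‖ ^ 2) := by
  have := norm_apply_add_le hQ hσ hι hF₁ hF₂
  linarith

theorem norm_apply_add_sub_le_of_lipschitz (hQ : ‖Q‖ ≤ K) (hσ : 0 ≤ σ)
    (hι : ∀ v, ‖ι v‖ ≤ σ * ‖v‖) {u u' : E}
    (hF₁ : ‖F₁ u - F₁ u'‖ ≤ C * ‖u - u'‖)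
    (hF₂ : ‖F₂ u - F₂ u'‖ ≤ C * max ‖u‖ ‖u'‖ * ‖u - u'‖) :
    ‖Q (ι (F₁ u) + F₂ u) - Q (ι (F₁ u') + F₂ u')‖ ≤
      K * C * (σ + max ‖u‖ ‖u'‖) * ‖u - u'‖ := by
  have hsub : Q (ι (F₁ u) + F₂ u) - Q (ι (F₁ u') + F₂ u') =
      Q (ι (F₁ u - F₁ u') + (F₂ u - F₂ u')) := by
    rw [← map_sub, map_sub ι]; congr 1; abel
  have := norm_apply_add_le hQ hσ hι hF₁ hF₂
  rw [hsub]
  linarith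

end Estimates

/-- With `ε = K C`: `r` is the radius of the invariant ball and `s` bounds `√T`. -/
theorem exists_radius_and_scale {ε μ : ℝ} (hε : 0 < ε) (hμ : 0 < μ) :
    ∃ r, 0 < r ∧ r ≤ μ ∧ ∃ s, 0 < s ∧ ∀ σ, σ ≤ s →
      ε * (σ + r ^ 2) ≤ r ∧ ε * (σ + r) ≤ 1 / 2 := by
  set r := min μ (1 / (4 * ε))
  have hr : 0 < r := lt_min hμ (by positivity)
  have hεr : ε * r ≤ 1 / 4 := by
    calc ε * r ≤ ε * (1 / (4 * ε)) := by gcongr; exact min_le_right _ _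
      _ = 1 / 4 := by field_simp
  refine ⟨r, hr, min_le_left _ _, min (r / (2 * ε)) (1 / (4 * ε)), by positivity,
    fun σ hσ => ?_⟩
  have hεσr : ε * σ ≤ r / 2 := by
    calc ε * σ ≤ ε * (r / (2 * ε)) := by gcongr; exact hσ.trans (min_le_left _ _)
      _ = r / 2 := by field_simp
  have hεσ : ε * σ ≤ 1 / 4 := by
    calc ε * σ ≤ ε * (1 / (4 * ε)) := by gcongr; exact hσ.trans (min_le_right _ _)
      _ = 1 / 4 := by field_simp
  constructor <;> nlinarith

/-- Abstract fixed-point short-time existence: `E T` models `x^γC^{2,α}_Φ(M×[0,T])`,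
`D T` the data space `x^γC^α_Φ(M×[0,T])`, `D1 T` the better space
`x^γC^{1,α}_Φ(M×[0,T])` whose inclusion `ι T` into `D T` gains a factor `√T`
(via the parametrix), and `Q T` the solution operator (parametrix) of
`∂_t + aΔ`, bounded uniformly by `K`. If `F = F₁ + F₂` satisfies the stated
Lipschitz/boundedness estimates on the ball of radius `μ`, then for `T' > 0`
small enough the map `u ↦ Q_{T'}(F(u))` is a contraction of a small closed
ball into itself and possesses there a unique fixed point `u*` (the solution of
`(∂_t + aΔ)u = F(u)`, `u|_{t=0} = 0`). -/
theorem stmt_19 (T₁ : ℝ) (hT₁ : 0 < T₁)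
    (E D D1 : ℝ → Type*)
    [∀ T, NormedAddCommGroup (E T)] [∀ T, NormedSpace ℝ (E T)] [∀ T, CompleteSpace (E T)]
    [∀ T, NormedAddCommGroup (D T)] [∀ T, NormedSpace ℝ (D T)]
    [∀ T, NormedAddCommGroup (D1 T)] [∀ T, NormedSpace ℝ (D1 T)]
    (Q : ∀ T, D T →L[ℝ] E T) (K : ℝ) (hK : 0 < K)
    (hQ : ∀ T ∈ Set.Ioc (0 : ℝ) T₁, ‖Q T‖ ≤ K)
    (ι : ∀ T, D1 T →L[ℝ] D T)
    (hι : ∀ T ∈ Set.Ioc (0 : ℝ) T₁, ∀ v : D1 T, ‖ι T v‖ ≤ Real.sqrt T * ‖v‖)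
    (F1 : ∀ T, E T → D1 T) (F2 : ∀ T, E T → D T)
    (μ : ℝ) (hμ : 0 < μ) (Cμ : ℝ) (hCμ : 0 < Cμ)
    (hF1lip : ∀ T ∈ Set.Ioc (0 : ℝ) T₁, ∀ u u' : E T, ‖u‖ ≤ μ → ‖u'‖ ≤ μ →
      ‖F1 T u - F1 T u'‖ ≤ Cμ * ‖u - u'‖)
    (hF1bd : ∀ T ∈ Set.Ioc (0 : ℝ) T₁, ∀ u : E T, ‖u‖ ≤ μ → ‖F1 T u‖ ≤ Cμ)
    (hF2lip : ∀ T ∈ Set.Ioc (0 : ℝ) T₁, ∀ u u' : E T, ‖u‖ ≤ μ → ‖u'‖ ≤ μ →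
      ‖F2 T u - F2 T u'‖ ≤ Cμ * max ‖u‖ ‖u'‖ * ‖u - u'‖)
    (hF2bd : ∀ T ∈ Set.Ioc (0 : ℝ) T₁, ∀ u : E T, ‖u‖ ≤ μ → ‖F2 T u‖ ≤ Cμ * ‖u‖ ^ 2) :
    ∃ T' ∈ Set.Ioc (0 : ℝ) T₁, ∃ r : ℝ, 0 < r ∧ r ≤ μ ∧ ∃ θ : ℝ, 0 ≤ θ ∧ θ < 1 ∧
      (∀ u : E T', ‖u‖ ≤ r → ‖Q T' (ι T' (F1 T' u) + F2 T' u)‖ ≤ r) ∧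
      (∀ u u' : E T', ‖u‖ ≤ r → ‖u'‖ ≤ r →
        ‖Q T' (ι T' (F1 T' u) + F2 T' u) - Q T' (ι T' (F1 T' u') + F2 T' u')‖ ≤
          θ * ‖u - u'‖) ∧
      ∃ ustar : E T', ‖ustar‖ ≤ r ∧
        ustar = Q T' (ι T' (F1 T' ustar) + F2 T' ustar) ∧
        ∀ v : E T', ‖v‖ ≤ r → v = Q T' (ι T' (F1 T' v) + F2 T' v) → v = ustar := by
  obtain ⟨r, hr, hrμ, s, hs, hsmall⟩ := exists_radius_and_scale (mul_pos hK hCμ) hμ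
  set T' := min T₁ (s ^ 2)
  have hT' : T' ∈ Set.Ioc 0 T₁ := ⟨lt_min hT₁ (by positivity), min_le_left _ _⟩
  have hσs : Real.sqrt T' ≤ s := (Real.sqrt_le_left hs.le).mpr (min_le_right _ _)
  obtain ⟨hball, hlip⟩ := hsmall _ hσs
  have hmaps : ∀ u : E T', ‖u‖ ≤ r → ‖Q T' (ι T' (F1 T' u) + F2 T' u)‖ ≤ r := fun u hu =>
    (norm_apply_add_le_of_bounds (hQ T' hT') (Real.sqrt_nonneg _) (hι T' hT')
      (hF1bd T' hT' u (hu.trans hrμ)) (hF2bd T' hT' u (hu.trans hrμ))).trans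
      (le_trans (by gcongr) hball)
  have hcontr : ∀ u u' : E T', ‖u‖ ≤ r → ‖u'‖ ≤ r →
      ‖Q T' (ι T' (F1 T' u) + F2 T' u) - Q T' (ι T' (F1 T' u') + F2 T' u')‖ ≤
        1 / 2 * ‖u - u'‖ := fun u u' hu hu' =>
    (norm_apply_add_sub_le_of_lipschitz (hQ T' hT') (Real.sqrt_nonneg _) (hι T' hT')
      (hF1lip T' hT' u u' (hu.trans hrμ) (hu'.trans hrμ))
      (hF2lip T' hT' u u' (hu.trans hrμ) (hu'.trans hrμ))).trans
      (by gcongr; exact hlip.trans' (by gcongr; exact max_le hu hu'))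
  exact ⟨T', hT', r, hr, hrμ, 1 / 2, by norm_num, by norm_num, hmaps, hcontr,
    exists_unique_fixedPoint_of_norm_le hr.le (by norm_num) hmaps hcontr⟩
end
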